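/- For 0 < k_v < 1 and k_f > 1 with k_v^2 + k_f^2 > 1, the partial derivative expression -(2k_v/(1-k_v^2)^{3/2})·( k_f√(1-k_v^2)/(k_v^2+k_f^2-1) - arctanh(√(1-k_v^2)/k_f) ) is strictly negative, provided √(1-k_v^2)/k_f < 1. -/
import Mathlib


/-- The inverse hyperbolic tangent, defined on `(-1, 1)` by
`arctanh x = (1/2) * log ((1+x)/(1-x))`. -/
noncomputable def arctanh (x : ℝ) : ℝ := Real.log ((1 + x) / (1 - x)) / 2

/-- Key inequality: for `0 < x < 1`, `arctanh x < x / (1 - x^2)`. -/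
lemma arctanh_lt (x : ℝ) (hx0 : 0 < x) (hx1 : x < 1) :
    arctanh x < x / (1 - x ^ 2) := by
  set y : ℝ := (1 + x) / (1 - x) with hy
  have h1x : 0 < 1 - x := by linarith
  have hy1 : 1 < y := by
    rw [hy, lt_div_iff₀ h1x]; linarith
  have hy0 : 0 < y := lt_trans one_pos hy1
  have hlog : 0 < Real.log y := Real.log_pos hy1
  have hs := Real.self_lt_sinh_iff.mpr hlog
  rw [Real.sinh_log hy0] at hs
  -- hs : log y < (y - y⁻¹)/2
  have hxy : (y - y⁻¹) / 2 = 2 * x / (1 - x ^ 2) := by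
    rw [hy]
    have h1x2 : (1 : ℝ) - x ^ 2 ≠ 0 := by nlinarith
    field_simp
    ring
  rw [hxy, mul_div_assoc] at hs
  have : arctanh x = Real.log y / 2 := rfl
  rw [this]
  linarith
/-- For `0 < k_v < 1`, `k_f > 1` with `k_v² + k_f² > 1` and `√(1-k_v²)/k_f < 1`, the
partial derivative `∂l_v^f/∂k_v` in the hypercycle case is strictly negative. -/
theorem hypercycle_arc_deriv_neg (kv kf : ℝ)
    (hkv0 : 0 < kv) (hkv1 : kv < 1) (hkf : 1 < kf)
    (hsum : 1 < kv ^ 2 + kf ^ 2)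
    (hx : Real.sqrt (1 - kv ^ 2) / kf < 1) :
    -(2 * kv / (1 - kv ^ 2) ^ ((3 : ℝ) / 2)) *
      (kf * Real.sqrt (1 - kv ^ 2) / (kv ^ 2 + kf ^ 2 - 1) -
        arctanh (Real.sqrt (1 - kv ^ 2) / kf)) < 0 := by
  have hkf0 : (0 : ℝ) < kf := lt_trans one_pos hkf
  have h1kv : (0 : ℝ) < 1 - kv ^ 2 := by nlinarith
  set s : ℝ := Real.sqrt (1 - kv ^ 2) with hs
  have hs0 : 0 < s := Real.sqrt_pos.mpr h1kv
  have hs2 : s ^ 2 = 1 - kv ^ 2 := Real.sq_sqrt h1kv.le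
  set x : ℝ := s / kf with hxdef
  have hx0 : 0 < x := div_pos hs0 hkf0
  have hd : (0 : ℝ) < kv ^ 2 + kf ^ 2 - 1 := by linarith
  have h1x2 : 1 - x ^ 2 = (kv ^ 2 + kf ^ 2 - 1) / kf ^ 2 := by
    rw [hxdef, div_pow, hs2]; field_simp; ring
  have hx1 : x < 1 := hx
  -- bracket positive
  have hbr : arctanh x < kf * s / (kv ^ 2 + kf ^ 2 - 1) := by
    have h := arctanh_lt x hx0 hx1
    have hxeq : x / (1 - x ^ 2) = kf * s / (kv ^ 2 + kf ^ 2 - 1) := by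
      rw [h1x2, hxdef]
      field_simp
    rwa [hxeq] at h
  have hpos : 0 < kf * s / (kv ^ 2 + kf ^ 2 - 1) - arctanh x := by linarith
  have hpre : 0 < 2 * kv / (1 - kv ^ 2) ^ ((3 : ℝ) / 2) :=
    div_pos (by linarith) (Real.rpow_pos_of_pos h1kv _)
  have := mul_pos hpre hpos
  linarith [this]
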